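/- arXiv:2405.01761 — 6 statements merged into one kernel-verified Lean document; each statement's English description precedes it below -/
import Mathlib

section
/- Let K be a symmetric positive definite t×t real matrix, D a diagonal N×N matrix with strictly positive diagonal entries, and Φ a t×N real matrix of full row rank t with N ≥ t. Define Ω = D + Φᵀ K Φ. Then (Φ Ω⁻¹ Φᵀ)⁻¹ = K + (Φ D⁻¹ Φᵀ)⁻¹. -/
/-!
Write `A = Φ D⁻¹ Φᵀ`. Then `Ω D⁻¹ Φᵀ = Φᵀ + Φᵀ K A = Φᵀ (K + A⁻¹) A`, and multiplying by `Φ Ω⁻¹`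
on the left gives `(Φ Ω⁻¹ Φᵀ) (K + A⁻¹) A = A`, so `K + A⁻¹` is the inverse of `Φ Ω⁻¹ Φᵀ`.
This only needs `D`, `Ω` and `A` to be invertible, which holds because they are positive
definite: `Ω` is `D` plus a positive semidefinite term, and `A` is positive definite because
full row rank makes `x ↦ Φᵀ x` injective.
-/

open Matrix

namespace Matrix

variable {m n R : Type*} [Fintype m] [Fintype n]

theorem inv_mul_inv_add_mul_mul_mul [DecidableEq m] [DecidableEq n] [CommRing R]
    {D : Matrix n n R} {K : Matrix m m R} {Φ : Matrix m n R} {Ψ : Matrix n m R}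
    (hD : IsUnit D.det) (hΩ : IsUnit (D + Ψ * K * Φ).det) (hA : IsUnit (Φ * D⁻¹ * Ψ).det) :
    (Φ * (D + Ψ * K * Φ)⁻¹ * Ψ)⁻¹ = K + (Φ * D⁻¹ * Ψ)⁻¹ := by
  set Ω := D + Ψ * K * Φ
  set A := Φ * D⁻¹ * Ψ
  have push_through : Ω * (D⁻¹ * Ψ) = Ψ * ((K + A⁻¹) * A) := by
    rw [Matrix.add_mul K, nonsing_inv_mul _ hA, Matrix.mul_add, Matrix.mul_one, Matrix.add_mul,
      ← Matrix.mul_assoc D, mul_nonsing_inv _ hD, Matrix.one_mul, add_comm]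
    simp only [A, Matrix.mul_assoc]
  have h : Φ * Ω⁻¹ * Ψ * (K + A⁻¹) * A = 1 * A := by
    rw [Matrix.mul_assoc _ _ A, Matrix.mul_assoc _ Ψ, ← push_through, Matrix.mul_assoc Φ,
      ← Matrix.mul_assoc Ω⁻¹, nonsing_inv_mul _ hΩ, Matrix.one_mul, Matrix.one_mul,
      ← Matrix.mul_assoc]
  exact inv_eq_right_inv ((A.isUnit_iff_isUnit_det.mpr hA).mul_right_cancel h)

theorem vecMul_injective_of_rank_eq_card [Field R] {Φ : Matrix m n R}
    (hΦ : Φ.rank = Fintype.card m) : Function.Injective Φ.vecMul := by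
  rw [vecMul_injective_iff, linearIndependent_iff_card_eq_finrank_span, ← hΦ,
    rank_eq_finrank_span_row, Set.finrank]

theorem PosDef.mul_mul_transpose_of_rank_eq_card [Field R] [PartialOrder R] [StarRing R]
    [TrivialStar R] {D : Matrix n n R} (hD : D.PosDef) {Φ : Matrix m n R}
    (hΦ : Φ.rank = Fintype.card m) : (Φ * D * Φᵀ).PosDef := by
  simpa using hD.mul_mul_conjTranspose_same (vecMul_injective_of_rank_eq_card hΦ)

end Matrix

theorem inv_PhiOmegaInvPhiT_general {t N : ℕ}
    (K : Matrix (Fin t) (Fin t) ℝ) (hK : K.PosDef)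
    (d : Fin N → ℝ) (hd : ∀ i, 0 < d i)
    (D : Matrix (Fin N) (Fin N) ℝ) (hD : D = Matrix.diagonal d)
    (Φ : Matrix (Fin t) (Fin N) ℝ) (hrank : Φ.rank = t)
    (Ω : Matrix (Fin N) (Fin N) ℝ) (hΩ : Ω = D + Φᵀ * K * Φ) :
    (Φ * Ω⁻¹ * Φᵀ)⁻¹ = K + (Φ * D⁻¹ * Φᵀ)⁻¹ := by
  have hDpos : D.PosDef := hD ▸ PosDef.diagonal hd
  have hΩpos : Ω.PosDef := by
    simpa [hΩ] using hDpos.add_posSemidef (hK.posSemidef.conjTranspose_mul_mul_same Φ)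
  have hApos : (Φ * D⁻¹ * Φᵀ).PosDef :=
    hDpos.inv.mul_mul_transpose_of_rank_eq_card (by rwa [Fintype.card_fin])
  subst hΩ
  exact inv_mul_inv_add_mul_mul_mul hDpos.det_pos.ne'.isUnit hΩpos.det_pos.ne'.isUnit
    hApos.det_pos.ne'.isUnit

theorem inv_PhiOmegaInvPhiT {t N : ℕ} (htN : t ≤ N)
    (K : Matrix (Fin t) (Fin t) ℝ) (hK : K.PosDef)
    (d : Fin N → ℝ) (hd : ∀ i, 0 < d i)
    (D : Matrix (Fin N) (Fin N) ℝ) (hD : D = Matrix.diagonal d)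
    (Φ : Matrix (Fin t) (Fin N) ℝ) (hrank : Φ.rank = t)
    (Ω : Matrix (Fin N) (Fin N) ℝ) (hΩ : Ω = D + Φᵀ * K * Φ) :
    (Φ * Ω⁻¹ * Φᵀ)⁻¹ = K + (Φ * D⁻¹ * Φᵀ)⁻¹ :=
  inv_PhiOmegaInvPhiT_general K hK d hd D hD Φ hrank Ω hΩ
end

section
/- Let K be a symmetric positive definite t×t real matrix, D a diagonal N×N matrix with strictly positive diagonal entries, and Φ a t×N real matrix of full row rank t with N ≥ t. Define Ω = D + Φᵀ K Φ. Then Ω⁻¹ Φᵀ (Φ Ω⁻¹ Φᵀ)⁻¹ = D⁻¹ Φᵀ (Φ D⁻¹ Φᵀ)⁻¹. In particular, the generalized least-squares solution Y D⁻¹ Φᵀ (Φ D⁻¹ Φᵀ)⁻¹ equals Y Ω⁻¹ Φᵀ (Φ Ω⁻¹ Φᵀ)⁻¹ for any p×N matrix Y. -/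
/-!
Put `A = Φ D⁻¹ Φᵀ` and `M = 1 + K A`. Then `Ω D⁻¹ Φᵀ = Φᵀ M`, so `Ω⁻¹ Φᵀ M = D⁻¹ Φᵀ` and
`(Φ Ω⁻¹ Φᵀ) M = A`. Hence `(Φ Ω⁻¹ Φᵀ)⁻¹ = M A⁻¹`, and
`Ω⁻¹ Φᵀ (Φ Ω⁻¹ Φᵀ)⁻¹ = Ω⁻¹ Φᵀ M A⁻¹ = D⁻¹ Φᵀ A⁻¹`. Positive definiteness and full row rank make
`Ω` and `A` invertible.
-/

open Matrix

namespace Matrix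

variable {R m n : Type*} [Fintype m] [Fintype n]

/-- With `U = Φᵀ` and `V = Φ`, the generalized least-squares map for the weight `Ω⁻¹`. -/
noncomputable def glsMap [CommRing R] [DecidableEq m] [DecidableEq n]
    (Ω : Matrix n n R) (U : Matrix n m R) (V : Matrix m n R) : Matrix n m R :=
  Ω⁻¹ * U * (V * Ω⁻¹ * U)⁻¹

theorem glsMap_add_mul_mul [CommRing R] [DecidableEq m] [DecidableEq n]
    {D : Matrix n n R} (hD : IsUnit D) (U : Matrix n m R) (K : Matrix m m R) (V : Matrix m n R)
    (hΩ : IsUnit (D + U * K * V)) (hA : IsUnit (V * D⁻¹ * U)) :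
    glsMap (D + U * K * V) U V = glsMap D U V := by
  rw [isUnit_iff_isUnit_det] at hD hΩ hA
  set Ω := D + U * K * V with hΩ_def
  set M := 1 + K * (V * D⁻¹ * U) with hM_def
  have hΩD : Ω * (D⁻¹ * U) = U * M := by
    rw [hΩ_def, hM_def, Matrix.add_mul, ← Matrix.mul_assoc D, mul_nonsing_inv D hD,
      Matrix.one_mul, Matrix.mul_add, Matrix.mul_one]
    simp only [Matrix.mul_assoc]
  have hΩinv : Ω⁻¹ * U * M = D⁻¹ * U := by
    rw [Matrix.mul_assoc, ← hΩD, ← Matrix.mul_assoc, nonsing_inv_mul Ω hΩ, Matrix.one_mul]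
  have hschur : V * Ω⁻¹ * U * M = V * D⁻¹ * U := by
    simp only [Matrix.mul_assoc] at hΩinv ⊢
    rw [hΩinv]
  have hschur_inv : (V * Ω⁻¹ * U)⁻¹ = M * (V * D⁻¹ * U)⁻¹ := by
    refine inv_eq_right_inv ?_
    rw [← Matrix.mul_assoc, hschur, mul_nonsing_inv _ hA]
  rw [glsMap, glsMap, hschur_inv, ← Matrix.mul_assoc, hΩinv]

theorem vecMul_injective_of_rank_eq_card_s3 [Field R] {A : Matrix m n R}
    (h : A.rank = Fintype.card m) : Function.Injective A.vecMul := by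
  rw [vecMul_injective_iff, linearIndependent_iff_card_eq_finrank_span, ← h,
    rank_eq_finrank_span_row, Set.finrank]

theorem PosDef.add_transpose_mul_mul_same {D : Matrix n n ℝ} (hD : D.PosDef)
    {K : Matrix m m ℝ} (hK : K.PosSemidef) (Φ : Matrix m n ℝ) : (D + Φᵀ * K * Φ).PosDef := by
  simpa only [conjTranspose_eq_transpose_of_trivial] using
    hD.add_posSemidef (hK.conjTranspose_mul_mul_same Φ)

theorem PosDef.mul_mul_transpose_same {A : Matrix n n ℝ} (hA : A.PosDef) {B : Matrix m n ℝ}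
    (hB : Function.Injective B.vecMul) : (B * A * Bᵀ).PosDef := by
  simpa only [conjTranspose_eq_transpose_of_trivial] using hA.mul_mul_conjTranspose_same hB

end Matrix

theorem OmegaInv_ls_eq_DInv_ls_general {t N : ℕ}
    (K : Matrix (Fin t) (Fin t) ℝ) (hK : K.PosDef)
    (d : Fin N → ℝ) (hd : ∀ i, 0 < d i)
    (D : Matrix (Fin N) (Fin N) ℝ) (hD : D = Matrix.diagonal d)
    (Φ : Matrix (Fin t) (Fin N) ℝ) (hrank : Φ.rank = t)
    (Ω : Matrix (Fin N) (Fin N) ℝ) (hΩ : Ω = D + Φᵀ * K * Φ) :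
    Ω⁻¹ * Φᵀ * (Φ * Ω⁻¹ * Φᵀ)⁻¹ = D⁻¹ * Φᵀ * (Φ * D⁻¹ * Φᵀ)⁻¹ ∧
    ∀ (p : ℕ) (Y : Matrix (Fin p) (Fin N) ℝ),
      Y * (D⁻¹ * Φᵀ * (Φ * D⁻¹ * Φᵀ)⁻¹) = Y * (Ω⁻¹ * Φᵀ * (Φ * Ω⁻¹ * Φᵀ)⁻¹) := by
  have hDpd : D.PosDef := hD ▸ PosDef.diagonal hd
  have hΦ : Function.Injective Φ.vecMul :=
    vecMul_injective_of_rank_eq_card_s3 (by rw [hrank, Fintype.card_fin])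
  have hgls : glsMap Ω Φᵀ Φ = glsMap D Φᵀ Φ := by
    subst hΩ
    exact glsMap_add_mul_mul hDpd.isUnit Φᵀ K Φ
      (hDpd.add_transpose_mul_mul_same hK.posSemidef Φ).isUnit
      (hDpd.inv.mul_mul_transpose_same hΦ).isUnit
  exact ⟨hgls, fun p Y => congrArg (Y * ·) hgls.symm⟩

theorem OmegaInv_ls_eq_DInv_ls {t N : ℕ} (htN : t ≤ N)
    (K : Matrix (Fin t) (Fin t) ℝ) (hK : K.PosDef)
    (d : Fin N → ℝ) (hd : ∀ i, 0 < d i)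
    (D : Matrix (Fin N) (Fin N) ℝ) (hD : D = Matrix.diagonal d)
    (Φ : Matrix (Fin t) (Fin N) ℝ) (hrank : Φ.rank = t)
    (Ω : Matrix (Fin N) (Fin N) ℝ) (hΩ : Ω = D + Φᵀ * K * Φ) :
    Ω⁻¹ * Φᵀ * (Φ * Ω⁻¹ * Φᵀ)⁻¹ = D⁻¹ * Φᵀ * (Φ * D⁻¹ * Φᵀ)⁻¹ ∧
    ∀ (p : ℕ) (Y : Matrix (Fin p) (Fin N) ℝ),
      Y * (D⁻¹ * Φᵀ * (Φ * D⁻¹ * Φᵀ)⁻¹) = Y * (Ω⁻¹ * Φᵀ * (Φ * Ω⁻¹ * Φᵀ)⁻¹) :=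
  OmegaInv_ls_eq_DInv_ls_general K hK d hd D hD Φ hrank Ω hΩ
end

section
/- For a fixed n×n real symmetric positive definite matrix B, the function f(A) = log det A + trace(A⁻¹ B), defined on the cone of n×n symmetric positive definite matrices, attains its unique global minimum at A = B, with minimum value log det B + n. -/
/-!
Factor `A⁻¹ = Nᴴ N` with `N` invertible. Then `C = N B Nᴴ` is positive definite, with
`tr C = tr (A⁻¹ B)` and `det C = det B / det A`, and `C = 1` only if `A = B`. So it suffices that
`tr C - log det C > n` for positive definite `C ≠ 1`: in terms of the eigenvalues `λᵢ > 0` of `C`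
this is `∑ (λᵢ - log λᵢ) > n`, which follows from `log x ≤ x - 1`, with equality only at `x = 1`.
-/

open Matrix
open scoped MatrixOrder

namespace Matrix

variable {ι : Type*} [Fintype ι] [DecidableEq ι]

lemma IsHermitian.eq_one_of_eigenvalues_eq_one {C : Matrix ι ι ℝ} (hC : C.IsHermitian)
    (h : ∀ i, hC.eigenvalues i = 1) : C = 1 :=
  CFC.eq_one_of_spectrum_subset_one C (by
    rw [hC.spectrum_real_eq_range_eigenvalues]
    rintro _ ⟨i, rfl⟩
    exact h i) hC

lemma PosDef.card_lt_trace_sub_log_det {C : Matrix ι ι ℝ} (hC : C.PosDef) (hne : C ≠ 1) :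
    (Fintype.card ι : ℝ) < C.trace - Real.log C.det := by
  set μ := hC.1.eigenvalues
  have hμ : ∀ i, 0 < μ i := hC.eigenvalues_pos
  obtain ⟨j, hj⟩ : ∃ j, μ j ≠ 1 := by
    by_contra! h
    exact hne (hC.1.eq_one_of_eigenvalues_eq_one h)
  have hlog : Real.log C.det = ∑ i, Real.log (μ i) := by
    rw [← Real.log_prod fun i _ => (hμ i).ne']
    simpa using congrArg Real.log hC.1.det_eq_prod_eigenvalues
  calc (Fintype.card ι : ℝ) = ∑ _i : ι, (1 : ℝ) := by simp
    _ < ∑ i, (μ i - Real.log (μ i)) :=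
        Finset.sum_lt_sum (fun i _ => by linarith [Real.log_le_sub_one_of_pos (hμ i)])
          ⟨j, Finset.mem_univ j, by linarith [Real.log_lt_sub_one_of_pos (hμ j) hj]⟩
    _ = C.trace - Real.log C.det := by
        rw [Finset.sum_sub_distrib, hlog]
        simpa using hC.1.trace_eq_sum_eigenvalues.symm

lemma PosDef.log_det_add_card_lt_log_det_add_trace_inv_mul {A B : Matrix ι ι ℝ}
    (hA : A.PosDef) (hB : B.PosDef) (hne : A ≠ B) :
    Real.log B.det + Fintype.card ι < Real.log A.det + (A⁻¹ * B).trace := by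
  obtain ⟨N, hN, hAN⟩ :=
    CStarAlgebra.isStrictlyPositive_iff_eq_star_mul_self.mp hA.inv.isStrictlyPositive
  set C := N * B * star N
  have hC : C.PosDef := (IsUnit.posDef_star_right_conjugate_iff hN).mpr hB
  have htrace : (A⁻¹ * B).trace = C.trace := by
    rw [hAN, mul_assoc, trace_mul_comm]
  have hdet : C.det = B.det / A.det := by
    have hdetA := congrArg det hAN
    rw [det_nonsing_inv, Ring.inverse_eq_inv', det_mul] at hdetA
    simp only [C, det_mul]
    rw [div_eq_mul_inv, hdetA]
    ring
  have hC1 : C ≠ 1 := by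
    intro h
    have hAB : A⁻¹ * B = 1 := hN.star.mul_left_injective <| by
      change A⁻¹ * B * star N = 1 * star N
      rw [hAN, one_mul, mul_assoc, mul_assoc, ← mul_assoc N]
      exact (congrArg (star N * ·) h).trans (mul_one _)
    exact hne <| (nonsing_inv_nonsing_inv A hA.det_pos.ne'.isUnit).symm.trans (inv_eq_right_inv hAB)
  have hkey := hC.card_lt_trace_sub_log_det hC1
  rw [hdet, Real.log_div hB.det_pos.ne' hA.det_pos.ne'] at hkey
  linarith

end Matrix

theorem logdet_traceinv_unique_min {n : ℕ}
    (B : Matrix (Fin n) (Fin n) ℝ) (hB : B.PosDef) :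
    Real.log B.det + (B⁻¹ * B).trace = Real.log B.det + (n : ℝ) ∧
    ∀ A : Matrix (Fin n) (Fin n) ℝ, A.PosDef → A ≠ B →
      Real.log B.det + (n : ℝ) < Real.log A.det + (A⁻¹ * B).trace := by
  refine ⟨?_, fun A hA hne => ?_⟩
  · rw [nonsing_inv_mul B hB.det_pos.ne'.isUnit, trace_one, Fintype.card_fin]
  · simpa using hA.log_det_add_card_lt_log_det_add_trace_inv_mul hB hne
end

section
/- Let B be an n×n real symmetric positive semidefinite matrix that is singular (not invertible). Then the function f(A) = log det A + trace(A⁻¹ B) on the cone of n×n symmetric positive definite matrices is unbounded below: for every real M there exists a positive definite A with f(A) < M. -/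
/-!
Diagonalise `B = U diag(λ) Uᵀ` and take `A = U diag(a) Uᵀ` with `a > 0`; then
`log det A + tr(A⁻¹ B) = ∑ᵢ (log aᵢ + λᵢ / aᵢ)`. Choosing `aᵢ = λᵢ` where `λᵢ > 0` and `aᵢ = eᵗ`
where `λᵢ = 0` makes this `k t + c` with `k ≥ 1` the number of zero eigenvalues, so it is
unbounded below as `t → -∞`.
-/

open Matrix Unitary Finset

namespace Matrix

variable {n R : Type*} [Fintype n] [DecidableEq n] [CommRing R] [StarRing R]

theorem det_conjStarAlgAut (u : unitary (Matrix n n R)) (X : Matrix n n R) :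
    (conjStarAlgAut R _ u X).det = X.det := by
  rw [conjStarAlgAut_apply, det_mul_right_comm, mul_star_self_of_mem u.2, one_mul]

theorem trace_conjStarAlgAut (u : unitary (Matrix n n R)) (X : Matrix n n R) :
    (conjStarAlgAut R _ u X).trace = X.trace := by
  rw [conjStarAlgAut_apply, trace_mul_cycle, star_mul_self_of_mem u.2, one_mul]

theorem inv_conjStarAlgAut (u : unitary (Matrix n n R)) (X : Matrix n n R) :
    (conjStarAlgAut R _ u X)⁻¹ = conjStarAlgAut R _ u X⁻¹ := by
  rw [conjStarAlgAut_apply, conjStarAlgAut_apply, mul_inv_rev, mul_inv_rev,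
    inv_eq_left_inv (mul_star_self_of_mem u.2), inv_eq_left_inv (star_mul_self_of_mem u.2),
    mul_assoc]

theorem log_det_add_trace_inv_mul_conjStarAlgAut_diagonal (u : unitary (Matrix n n ℝ))
    {a : n → ℝ} (ha : ∀ i, 0 < a i) (l : n → ℝ) :
    Real.log (conjStarAlgAut ℝ _ u (diagonal a)).det +
        ((conjStarAlgAut ℝ _ u (diagonal a))⁻¹ * conjStarAlgAut ℝ _ u (diagonal l)).trace =
      ∑ i, (Real.log (a i) + l i / a i) := by
  have hinv : (diagonal a)⁻¹ = diagonal a⁻¹ :=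
    inv_eq_left_inv <| by
      rw [diagonal_mul_diagonal, ← diagonal_one]
      exact congrArg diagonal (funext fun i => inv_mul_cancel₀ (ha i).ne')
  rw [inv_conjStarAlgAut, ← map_mul, det_conjStarAlgAut, trace_conjStarAlgAut, hinv,
    diagonal_mul_diagonal, det_diagonal, trace_diagonal, Real.log_prod fun i _ => (ha i).ne',
    ← sum_add_distrib]
  simp only [Pi.inv_apply, div_eq_inv_mul]

end Matrix

theorem exists_pos_sum_log_add_div_lt {ι : Type*} [Fintype ι] {l : ι → ℝ} (hl : ∀ i, 0 ≤ l i)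
    (hzero : ∃ i, l i = 0) (M : ℝ) :
    ∃ a : ι → ℝ, (∀ i, 0 < a i) ∧ ∑ i, (Real.log (a i) + l i / a i) < M := by
  classical
  set k : ℕ := #{i | l i = 0}
  set c : ℝ := ∑ i with l i ≠ 0, (Real.log (l i) + 1)
  have hk : (0 : ℝ) < k := by
    obtain ⟨i, hi⟩ := hzero
    exact_mod_cast card_pos.mpr ⟨i, by simpa using hi⟩
  set t : ℝ := (M - c - 1) / k
  set a : ι → ℝ := fun i => if l i = 0 then Real.exp t else l i
  have hterm (i : ι) :
      Real.log (a i) + l i / a i = if l i = 0 then t else Real.log (l i) + 1 := by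
    by_cases h : l i = 0 <;> simp [a, h]
  refine ⟨a, fun i => ?_, ?_⟩
  · by_cases h : l i = 0
    · simp [a, h, Real.exp_pos]
    · simpa [a, h] using (hl i).lt_of_ne' h
  calc ∑ i, (Real.log (a i) + l i / a i)
      = k * t + c := by
        rw [sum_congr rfl fun i _ => hterm i, sum_ite, sum_const,
          nsmul_eq_mul]
    _ = M - 1 := by rw [mul_div_cancel₀ _ hk.ne']; ring
    _ < M := by linarith

theorem logdet_traceinv_unbdd_below_of_singular {n : ℕ}
    (B : Matrix (Fin n) (Fin n) ℝ) (hB : B.PosSemidef)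
    (hsing : ¬ IsUnit B.det) :
    ∀ M : ℝ, ∃ A : Matrix (Fin n) (Fin n) ℝ,
      A.PosDef ∧ Real.log A.det + (A⁻¹ * B).trace < M := by
  intro M
  have hH : B.IsHermitian := hB.isHermitian
  set u := hH.eigenvectorUnitary
  have hspec : conjStarAlgAut ℝ _ u (diagonal hH.eigenvalues) = B := by
    simpa using hH.spectral_theorem.symm
  have hzero : ∃ i, hH.eigenvalues i = 0 := by
    have hdet : B.det = 0 := by simpa using hsing
    simpa [hH.det_eq_prod_eigenvalues, prod_eq_zero_iff] using hdet
  obtain ⟨a, ha, hlt⟩ := exists_pos_sum_log_add_div_lt hB.eigenvalues_nonneg hzero M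
  refine ⟨conjStarAlgAut ℝ _ u (diagonal a), ?_, ?_⟩
  · simpa [isUnit_coe.posDef_star_right_conjugate_iff, posDef_diagonal_iff] using ha
  · rwa [← hspec, log_det_add_trace_inv_mul_conjStarAlgAut_diagonal u ha]
end

section
/- Let Φ be a t×N real matrix of full row rank (N ≥ t), D an N×N diagonal matrix with positive diagonal, K a t×t symmetric positive definite matrix, and H a t×t symmetric positive semidefinite matrix with H ≠ 0. Define Ω(K) = D + Φᵀ K Φ. Then det Ω(K + H) > det Ω(K), i.e., K ↦ log det Ω(K) is strictly increasing in the Löwner order. -/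
/-!
Write `A = D + ΦᵀKΦ`, which is positive definite, and `B = ΦᵀHΦ`, so that `Ω(K + H) = A + B`.
With `S = √A` and `M = S⁻¹BS⁻¹ ⪰ 0` we get `det (A + B) = det A · det (1 + M)`, and
`det (1 + M) = ∏ (1 + λᵢ) > 1` because the eigenvalues `λᵢ` of `M` are nonnegative and not all
zero. Full row rank gives a right inverse `Φ * R = 1`, hence `Rᵀ B R = H`, so `B ≠ 0`.
-/

open Matrix
open scoped MatrixOrder

namespace Matrix

variable {m n : Type*} [Fintype m] [Fintype n]

theorem IsHermitian.det_one_add [DecidableEq n] {𝕜 : Type*} [RCLike 𝕜] {M : Matrix n n 𝕜}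
    (hM : M.IsHermitian) : (1 + M).det = ∏ i, (1 + (hM.eigenvalues i : 𝕜)) := by
  set U : Matrix n n 𝕜 := (hM.eigenvectorUnitary : Matrix n n 𝕜)
  have hUU : star U * U = 1 := Matrix.mem_unitaryGroup_iff'.mp hM.eigenvectorUnitary.2
  conv_lhs => rw [hM.spectral_theorem, Unitary.conjStarAlgAut_apply, Matrix.mul_assoc,
    det_one_add_mul_comm, Matrix.mul_assoc, hUU, Matrix.mul_one, ← diagonal_one, diagonal_add,
    det_diagonal]
  simp

theorem PosSemidef.one_lt_det_one_add [DecidableEq n] {M : Matrix n n ℝ} (hM : M.PosSemidef)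
    (hM0 : M ≠ 0) : 1 < (1 + M).det := by
  obtain ⟨i, hi⟩ := Function.ne_iff.mp (mt hM.isHermitian.eigenvalues_eq_zero_iff.mp hM0)
  rw [hM.isHermitian.det_one_add, ← Finset.prod_const_one]
  refine Finset.prod_lt_prod (fun _ _ ↦ one_pos) (fun j _ ↦ ?_) ⟨i, Finset.mem_univ i, ?_⟩
  · simpa using hM.eigenvalues_nonneg j
  · simpa using (hM.eigenvalues_nonneg i).lt_of_ne' hi

theorem PosDef.det_lt_det_add [DecidableEq n] {A B : Matrix n n ℝ} (hA : A.PosDef)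
    (hB : B.PosSemidef) (hB0 : B ≠ 0) : A.det < (A + B).det := by
  set S := CFC.sqrt A
  have hSS : S * S = A := CFC.sqrt_mul_sqrt_self A hA.posSemidef.nonneg
  have hS : IsUnit S.det :=
    isUnit_of_mul_isUnit_left (by rw [← det_mul, hSS]; exact hA.det_pos.ne'.isUnit)
  set M := S⁻¹ * B * S⁻¹
  have hSMS : S * M * S = B := by
    simp only [M, Matrix.mul_assoc, nonsing_inv_mul _ hS, Matrix.mul_one,
      mul_nonsing_inv_cancel_left _ _ hS]
  have hM : M.PosSemidef := by
    have := hB.conjTranspose_mul_mul_same S⁻¹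
    rwa [conjTranspose_nonsing_inv, (CFC.sqrt_nonneg A).posSemidef.isHermitian.eq] at this
  have hM0 : M ≠ 0 := by
    rintro hM0
    exact hB0 (by rw [← hSMS, hM0, Matrix.mul_zero, Matrix.zero_mul])
  have hAB : A + B = S * (1 + M) * S := by
    rw [Matrix.mul_add, Matrix.add_mul, Matrix.mul_one, hSS, hSMS]
  calc A.det = A.det * 1 := (mul_one _).symm
    _ < A.det * (1 + M).det := mul_lt_mul_of_pos_left (hM.one_lt_det_one_add hM0) hA.det_pos
    _ = (A + B).det := by rw [hAB, ← hSS, det_mul, det_mul, det_mul]; ring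

theorem exists_mul_eq_one_of_rank_eq_card [DecidableEq m] {K : Type*} [Field K]
    {Φ : Matrix m n K} (hΦ : Φ.rank = Fintype.card m) : ∃ R : Matrix n m K, Φ * R = 1 := by
  have hrange : LinearMap.range Φ.mulVecLin = ⊤ :=
    Submodule.eq_top_of_finrank_eq (by rwa [Module.finrank_fintype_fun_eq_card])
  exact mulVec_surjective_iff_exists_right_inverse.mp (LinearMap.range_eq_top.mp hrange)

theorem conjTranspose_mul_mul_ne_zero_of_mul_eq_one [DecidableEq m] {α : Type*} [Semiring α]
    [StarRing α] {Φ : Matrix m n α} {R : Matrix n m α} (hΦR : Φ * R = 1) {H : Matrix m m α}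
    (hH : H ≠ 0) : Φᴴ * H * Φ ≠ 0 := by
  intro h
  have : (Φ * R)ᴴ * H * (Φ * R) = Rᴴ * (Φᴴ * H * Φ) * R := by
    simp only [conjTranspose_mul, Matrix.mul_assoc]
  rw [h, hΦR, conjTranspose_one, Matrix.one_mul, Matrix.mul_one, Matrix.mul_zero,
    Matrix.zero_mul] at this
  exact hH this

end Matrix

theorem det_Omega_strict_mono_general {t N : ℕ}
    (Φ : Matrix (Fin t) (Fin N) ℝ) (hrank : Φ.rank = t)
    (d : Fin N → ℝ) (hd : ∀ i, 0 < d i)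
    (D : Matrix (Fin N) (Fin N) ℝ) (hD : D = Matrix.diagonal d)
    (K : Matrix (Fin t) (Fin t) ℝ) (hK : K.PosDef)
    (H : Matrix (Fin t) (Fin t) ℝ) (hH : H.PosSemidef) (hH0 : H ≠ 0) :
    (D + Φᵀ * K * Φ).det < (D + Φᵀ * (K + H) * Φ).det := by
  obtain ⟨R, hΦR⟩ := exists_mul_eq_one_of_rank_eq_card (hrank.trans (Fintype.card_fin t).symm)
  have hΩ : (D + Φᴴ * K * Φ).PosDef := by
    rw [hD]
    exact (posDef_diagonal_iff.mpr hd).add_posSemidef (hK.posSemidef.conjTranspose_mul_mul_same Φ)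
  rw [← conjTranspose_eq_transpose_of_trivial, Matrix.mul_add, Matrix.add_mul, ← add_assoc]
  exact hΩ.det_lt_det_add (hH.conjTranspose_mul_mul_same Φ)
    (conjTranspose_mul_mul_ne_zero_of_mul_eq_one hΦR hH0)

theorem det_Omega_strict_mono {t N : ℕ} (htN : t ≤ N)
    (Φ : Matrix (Fin t) (Fin N) ℝ) (hrank : Φ.rank = t)
    (d : Fin N → ℝ) (hd : ∀ i, 0 < d i)
    (D : Matrix (Fin N) (Fin N) ℝ) (hD : D = Matrix.diagonal d)
    (K : Matrix (Fin t) (Fin t) ℝ) (hK : K.PosDef)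
    (H : Matrix (Fin t) (Fin t) ℝ) (hH : H.PosSemidef) (hH0 : H ≠ 0) :
    (D + Φᵀ * K * Φ).det < (D + Φᵀ * (K + H) * Φ).det :=
  det_Omega_strict_mono_general Φ hrank d hd D hD K hK H hH hH0
end

section
/- (Bias of the evidence-maximizing scale estimator.) Let Y be a p×N random matrix following a matrix-T distribution with mean MΦ, row scale Ψ (p×p symmetric positive definite), column scale Ω = D + ΦᵀKΦ, and degrees of freedom ν − 2p, where the second-moment identity E[(Y − MΦ) Q (Y − MΦ)ᵀ] = (1/(ν−2p−2)) trace(Qᵀ Ω) Ψ holds for any N×N matrix Q (assuming ν − 2p > 2). Let P = I − D^{-1/2}Φᵀ(ΦD⁻¹Φᵀ)⁻¹ΦD^{-1/2} and ν' = ν − p − 1. Define Ψ̂ = (ν'/N) Y D^{-1/2} P D^{-1/2} Yᵀ. Then E[Ψ̂] = ((N−t)/N) · (ν'/(ν' − p − 1)) · Ψ. -/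
open Matrix MeasureTheory

/-!
Write `S = D^{-1/2}`. Then `P` is the orthogonal projection onto the kernel of the whitened
design `Φ S`, so `Q = S P S` satisfies `Φ Q = 0 = Q Φᵀ`. Hence the unknown mean `M Φ` drops out
of `Y Q Yᵀ`, the second-moment identity applies to `Q`, and
`tr (Qᵀ Ω) = tr (Q D) = tr (P S D S) = tr P = N - t`. The constant matches because
`ν' - p - 1 = ν - 2p - 2`.
-/

namespace Matrix

variable {m n R : Type*} [Fintype m] [Fintype n] [DecidableEq m]

theorem isUnit_det_of_rank_eq_card [Field R] {A : Matrix m m R} (h : A.rank = Fintype.card m) :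
    IsUnit A.det := by
  refine (isUnit_iff_isUnit_det A).mp (mulVec_surjective_iff_isUnit.mp ?_)
  have hrange : LinearMap.range A.mulVecLin = ⊤ :=
    Submodule.eq_top_of_finrank_eq (by rw [← rank, h, Module.finrank_fintype_fun_eq_card])
  exact LinearMap.range_eq_top.mp hrange

theorem isUnit_det_mul_transpose_of_rank_eq_card [Field R] [LinearOrder R] [IsStrictOrderedRing R]
    {B : Matrix m n R} (h : B.rank = Fintype.card m) : IsUnit (B * Bᵀ).det :=
  isUnit_det_of_rank_eq_card (by rw [rank_self_mul_transpose, h])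

/-- The orthogonal projection onto `ker B` when `B` has full row rank; otherwise the junk
inverse `(B * Bᵀ)⁻¹ = 0` makes it `1`. -/
noncomputable def kerProjection [DecidableEq n] [CommRing R] (B : Matrix m n R) : Matrix n n R :=
  1 - Bᵀ * (B * Bᵀ)⁻¹ * B

section kerProjection

variable [DecidableEq n] [CommRing R] {B : Matrix m n R}

theorem kerProjection_transpose (B : Matrix m n R) : (kerProjection B)ᵀ = kerProjection B := by
  simp only [kerProjection, transpose_sub, transpose_one, transpose_mul, transpose_transpose,
    transpose_nonsing_inv, Matrix.mul_assoc]

theorem mul_kerProjection (h : IsUnit (B * Bᵀ).det) : B * kerProjection B = 0 := by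
  rw [kerProjection, Matrix.mul_sub, Matrix.mul_one, ← Matrix.mul_assoc, ← Matrix.mul_assoc,
    mul_nonsing_inv _ h, Matrix.one_mul, sub_self]

theorem trace_kerProjection (h : IsUnit (B * Bᵀ).det) :
    (kerProjection B).trace = Fintype.card n - Fintype.card m := by
  rw [kerProjection, trace_sub, trace_one, trace_mul_comm, ← Matrix.mul_assoc,
    mul_nonsing_inv _ h, trace_one]

end kerProjection

theorem sub_mul_mul_transpose_sub_of_mul_eq_zero {p t : Type*} [CommRing R] [Fintype t]
    {Y : Matrix p n R} {M : Matrix p t R} {Φ : Matrix t n R} {Q : Matrix n n R}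
    (hΦQ : Φ * Q = 0) (hQΦ : Q * Φᵀ = 0) :
    (Y - M * Φ) * Q * (Y - M * Φ)ᵀ = Y * Q * Yᵀ := by
  simp only [transpose_sub, transpose_mul, Matrix.sub_mul, Matrix.mul_sub, Matrix.mul_assoc, hΦQ,
    ← Matrix.mul_assoc Q Φᵀ, hQΦ, Matrix.mul_zero, Matrix.zero_mul, sub_zero]

section Whitened

variable [DecidableEq n] [CommRing R] {Φ : Matrix m n R} {S : Matrix n n R}

theorem kerProjection_mul_eq_of_transpose_eq (hS : Sᵀ = S) :
    kerProjection (Φ * S) = 1 - S * Φᵀ * (Φ * (S * S) * Φᵀ)⁻¹ * Φ * S := by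
  simp only [kerProjection, transpose_mul, hS, Matrix.mul_assoc]

theorem mul_kerProjection_sandwich_eq_zero (h : IsUnit ((Φ * S) * (Φ * S)ᵀ).det) :
    Φ * (S * kerProjection (Φ * S) * S) = 0 := by
  rw [← Matrix.mul_assoc, ← Matrix.mul_assoc, mul_kerProjection h, Matrix.zero_mul]

theorem kerProjection_sandwich_transpose (hS : Sᵀ = S) :
    (S * kerProjection (Φ * S) * S)ᵀ = S * kerProjection (Φ * S) * S := by
  rw [transpose_mul, transpose_mul, hS, kerProjection_transpose, Matrix.mul_assoc]

theorem kerProjection_sandwich_mul_transpose_eq_zero (hS : Sᵀ = S)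
    (h : IsUnit ((Φ * S) * (Φ * S)ᵀ).det) : S * kerProjection (Φ * S) * S * Φᵀ = 0 := by
  rw [← kerProjection_sandwich_transpose hS, ← transpose_mul,
    mul_kerProjection_sandwich_eq_zero h, transpose_zero]

theorem trace_transpose_kerProjection_sandwich_mul {D : Matrix n n R} (K : Matrix m m R)
    (hS : Sᵀ = S) (hSDS : S * D * S = 1) (h : IsUnit ((Φ * S) * (Φ * S)ᵀ).det) :
    ((S * kerProjection (Φ * S) * S)ᵀ * (D + Φᵀ * K * Φ)).trace =
      Fintype.card n - Fintype.card m := by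
  have hΦKΦ : S * kerProjection (Φ * S) * S * (Φᵀ * K * Φ) = 0 := by
    rw [← Matrix.mul_assoc, ← Matrix.mul_assoc, kerProjection_sandwich_mul_transpose_eq_zero hS h,
      Matrix.zero_mul, Matrix.zero_mul]
  calc ((S * kerProjection (Φ * S) * S)ᵀ * (D + Φᵀ * K * Φ)).trace
      = (kerProjection (Φ * S) * (S * D * S)).trace := by
        rw [kerProjection_sandwich_transpose hS, Matrix.mul_add, hΦKΦ, add_zero]
        simp only [Matrix.mul_assoc]
        rw [trace_mul_comm]
        simp only [Matrix.mul_assoc]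
    _ = Fintype.card n - Fintype.card m := by
        rw [hSDS, Matrix.mul_one, trace_kerProjection h]

end Whitened

end Matrix

theorem diagonal_inv_sqrt_mul_self {n : Type*} [Fintype n] [DecidableEq n] {d : n → ℝ}
    (hd : ∀ i, 0 < d i) :
    diagonal (fun i => (√(d i))⁻¹) * diagonal (fun i => (√(d i))⁻¹) = (diagonal d)⁻¹ := by
  refine (inv_eq_left_inv ?_).symm
  rw [diagonal_mul_diagonal, diagonal_mul_diagonal, ← diagonal_one]
  congr 1
  funext i
  rw [← mul_inv, Real.mul_self_sqrt (hd i).le, inv_mul_cancel₀ (hd i).ne']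

theorem diagonal_inv_sqrt_mul_diagonal_mul_self {n : Type*} [Fintype n] [DecidableEq n]
    {d : n → ℝ} (hd : ∀ i, 0 < d i) :
    diagonal (fun i => (√(d i))⁻¹) * diagonal d * diagonal (fun i => (√(d i))⁻¹) = 1 := by
  rw [diagonal_mul_diagonal, diagonal_mul_diagonal, ← diagonal_one]
  congr 1
  funext i
  rw [mul_right_comm, ← mul_inv, Real.mul_self_sqrt (hd i).le, inv_mul_cancel₀ (hd i).ne']

theorem scale_estimator_bias_general {p t N : ℕ}
    {Ωs : Type*} [MeasurableSpace Ωs] (μ : Measure Ωs)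
    (Φ : Matrix (Fin t) (Fin N) ℝ) (hrank : Φ.rank = t)
    (d : Fin N → ℝ) (hd : ∀ i, 0 < d i)
    (D : Matrix (Fin N) (Fin N) ℝ) (hD : D = Matrix.diagonal d)
    (K : Matrix (Fin t) (Fin t) ℝ)
    (Ωm : Matrix (Fin N) (Fin N) ℝ) (hΩm : Ωm = D + Φᵀ * K * Φ)
    (Ψ : Matrix (Fin p) (Fin p) ℝ)
    (M : Matrix (Fin p) (Fin t) ℝ)
    (ν : ℝ)
    (Y : Ωs → Matrix (Fin p) (Fin N) ℝ)
    -- second-moment identity of the matrix-T evidence Y ~ T(MΦ, Ψ, Ωm, ν - 2p)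
    (hmoment : ∀ (Q : Matrix (Fin N) (Fin N) ℝ) (i j : Fin p),
      ∫ ω, ((Y ω - M * Φ) * Q * (Y ω - M * Φ)ᵀ) i j ∂μ
        = (1 / (ν - 2 * (p : ℝ) - 2)) * (Qᵀ * Ωm).trace * Ψ i j)
    (Dhi : Matrix (Fin N) (Fin N) ℝ)
    (hDhi : Dhi = Matrix.diagonal fun i => (Real.sqrt (d i))⁻¹)
    (P : Matrix (Fin N) (Fin N) ℝ)
    (hP : P = 1 - Dhi * Φᵀ * (Φ * D⁻¹ * Φᵀ)⁻¹ * Φ * Dhi)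
    (ν' : ℝ) (hν' : ν' = ν - (p : ℝ) - 1)
    (Ψhat : Ωs → Matrix (Fin p) (Fin p) ℝ)
    (hΨhat : ∀ ω, Ψhat ω = (ν' / (N : ℝ)) • (Y ω * Dhi * P * Dhi * (Y ω)ᵀ)) :
    ∀ i j : Fin p,
      ∫ ω, Ψhat ω i j ∂μ
        = (((N : ℝ) - (t : ℝ)) / (N : ℝ)) * (ν' / (ν' - (p : ℝ) - 1)) * Ψ i j := by
  have hDhit : Dhiᵀ = Dhi := by rw [hDhi, diagonal_transpose]
  have hDhiD : Dhi * D * Dhi = 1 := hDhi ▸ hD ▸ diagonal_inv_sqrt_mul_diagonal_mul_self hd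
  have hP' : P = kerProjection (Φ * Dhi) := by
    rw [kerProjection_mul_eq_of_transpose_eq hDhit, hP, hDhi, hD, diagonal_inv_sqrt_mul_self hd]
  have hunit : IsUnit ((Φ * Dhi) * (Φ * Dhi)ᵀ).det := by
    have hDhi_unit : IsUnit Dhi.det :=
      isUnit_det_of_right_inverse (B := D * Dhi) (by rw [← Matrix.mul_assoc, hDhiD])
    refine isUnit_det_mul_transpose_of_rank_eq_card ?_
    rw [rank_mul_eq_left_of_isUnit_det _ _ hDhi_unit, hrank, Fintype.card_fin]
  have hΨhat_apply (ω : Ωs) (i j : Fin p) : Ψhat ω i j = ν' / N *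
      ((Y ω - M * Φ) * (Dhi * kerProjection (Φ * Dhi) * Dhi) * (Y ω - M * Φ)ᵀ) i j := by
    rw [sub_mul_mul_transpose_sub_of_mul_eq_zero (mul_kerProjection_sandwich_eq_zero hunit)
      (kerProjection_sandwich_mul_transpose_eq_zero hDhit hunit), hΨhat, hP', Matrix.smul_apply,
      smul_eq_mul]
    simp only [Matrix.mul_assoc]
  intro i j
  simp only [hΨhat_apply]
  rw [integral_const_mul, hmoment, hΩm,
    trace_transpose_kerProjection_sandwich_mul K hDhit hDhiD hunit, hν']
  simp only [Fintype.card_fin]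
  ring

theorem scale_estimator_bias {p t N : ℕ} (htN : t ≤ N)
    {Ωs : Type*} [MeasurableSpace Ωs] (μ : Measure Ωs) [IsProbabilityMeasure μ]
    (Φ : Matrix (Fin t) (Fin N) ℝ) (hrank : Φ.rank = t)
    (d : Fin N → ℝ) (hd : ∀ i, 0 < d i)
    (D : Matrix (Fin N) (Fin N) ℝ) (hD : D = Matrix.diagonal d)
    (K : Matrix (Fin t) (Fin t) ℝ) (hK : K.PosDef)
    (Ωm : Matrix (Fin N) (Fin N) ℝ) (hΩm : Ωm = D + Φᵀ * K * Φ)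
    (Ψ : Matrix (Fin p) (Fin p) ℝ) (hΨ : Ψ.PosDef)
    (M : Matrix (Fin p) (Fin t) ℝ)
    (ν : ℝ) (hν : 2 * (p : ℝ) + 2 < ν)
    (Y : Ωs → Matrix (Fin p) (Fin N) ℝ)
    -- second-moment identity of the matrix-T evidence Y ~ T(MΦ, Ψ, Ωm, ν - 2p)
    (hmoment : ∀ (Q : Matrix (Fin N) (Fin N) ℝ) (i j : Fin p),
      ∫ ω, ((Y ω - M * Φ) * Q * (Y ω - M * Φ)ᵀ) i j ∂μ
        = (1 / (ν - 2 * (p : ℝ) - 2)) * (Qᵀ * Ωm).trace * Ψ i j)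
    (Dhi : Matrix (Fin N) (Fin N) ℝ)
    (hDhi : Dhi = Matrix.diagonal fun i => (Real.sqrt (d i))⁻¹)
    (P : Matrix (Fin N) (Fin N) ℝ)
    (hP : P = 1 - Dhi * Φᵀ * (Φ * D⁻¹ * Φᵀ)⁻¹ * Φ * Dhi)
    (ν' : ℝ) (hν' : ν' = ν - (p : ℝ) - 1)
    (Ψhat : Ωs → Matrix (Fin p) (Fin p) ℝ)
    (hΨhat : ∀ ω, Ψhat ω = (ν' / (N : ℝ)) • (Y ω * Dhi * P * Dhi * (Y ω)ᵀ)) :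
    ∀ i j : Fin p,
      ∫ ω, Ψhat ω i j ∂μ
        = (((N : ℝ) - (t : ℝ)) / (N : ℝ)) * (ν' / (ν' - (p : ℝ) - 1)) * Ψ i j :=
  scale_estimator_bias_general μ Φ hrank d hd D hD K Ωm hΩm Ψ M ν Y hmoment Dhi hDhi P hP ν' hν'
    Ψhat hΨhat
end
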